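/- arXiv:2602.08297 — 2 statements merged into one kernel-verified Lean document; each statement's English description precedes it below -/
import Mathlib

section
/- Let G be a finite subgroup of the n×n permutation matrices and h : ℝ^n → ℝ a polynomial (hence continuous) function. For each P ∈ G let L_P = {x : h(P x) − h(x) < 0}, and suppose L_P ≠ ∅ for every P ∈ G with P ≠ I. Then F = ⋂_{P ∈ G, P ≠ I} L_P is a fundamental region for G: F is open, P·F ∩ F = ∅ for all P ∈ G with P ≠ I, and ⋃_{P ∈ G} closure(P·F) = ℝ^n. -/
set_option maxHeartbeats 1000000

open MvPolynomial

/-- A nonzero real multivariate polynomial is nonvanishing somewhere in any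
nonempty open set (identity principle for analytic functions). -/
lemma exists_eval_ne_zero_of_ne_zero {n : ℕ} {p : MvPolynomial (Fin n) ℝ} (hp : p ≠ 0)
    {U : Set (Fin n → ℝ)} (hU : IsOpen U) (hUne : U.Nonempty) :
    ∃ x ∈ U, MvPolynomial.eval x p ≠ 0 := by
  by_contra hc
  push_neg at hc
  obtain ⟨z, hz⟩ := hUne
  have han : AnalyticOnNhd ℝ (fun x : Fin n → ℝ => MvPolynomial.eval x p) Set.univ :=
    AnalyticOnNhd.eval_linearMap (LinearMap.id : (Fin n → ℝ) →ₗ[ℝ] (Fin n → ℝ)) p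
  have hev : (fun x : Fin n → ℝ => MvPolynomial.eval x p) =ᶠ[nhds z] 0 :=
    Filter.eventuallyEq_of_mem (hU.mem_nhds hz) (fun x hx => hc x hx)
  have hzero := han.eqOn_zero_of_preconnected_of_eventuallyEq_zero
      isPreconnected_univ (Set.mem_univ z) hev
  exact hp (MvPolynomial.funext fun x => by simpa using hzero (Set.mem_univ x))

/-- Fundamental region theorem: if `h` is a polynomial function on `ℝ^n`, `G`
a finite group of permutations, `L_P = {x | h (P x) - h x < 0}` is nonempty for
each non-identity `P ∈ G`, then `F = ⋂_{P ≠ 1} L_P` is open, disjoint from each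
of its non-identity translates, and the closures of its translates cover `ℝ^n`. -/
theorem fundamental_region (n : ℕ) (G : Subgroup (Equiv.Perm (Fin n)))
    (p : MvPolynomial (Fin n) ℝ) (h : (Fin n → ℝ) → ℝ)
    (hp : h = fun x => MvPolynomial.eval x p)
    (L : Equiv.Perm (Fin n) → Set (Fin n → ℝ))
    (hL : ∀ σ, L σ = {x | h (x ∘ σ) - h x < 0})
    (hne : ∀ σ ∈ G, σ ≠ 1 → (L σ).Nonempty)
    (F : Set (Fin n → ℝ))
    (hF : F = ⋂ σ ∈ G, ⋂ _ : σ ≠ 1, L σ) :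
    IsOpen F ∧
    (∀ σ ∈ G, σ ≠ 1 → Disjoint ((fun x => x ∘ ⇑σ) '' F) F) ∧
    (⋃ σ ∈ G, closure ((fun x => x ∘ ⇑σ) '' F)) = Set.univ := by
  classical
  have hcont : Continuous h := by
    rw [hp]; exact MvPolynomial.continuous_eval (p := p)
  have hcomp : ∀ (z : Fin n → ℝ) (σ τ : Equiv.Perm (Fin n)),
      (z ∘ ⇑σ) ∘ ⇑τ = z ∘ ⇑(σ * τ) := by
    intro z σ τ; funext i; simp [Function.comp]
  have hcontσ : ∀ σ : Equiv.Perm (Fin n), Continuous fun x : Fin n → ℝ => x ∘ ⇑σ :=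
    fun σ => continuous_pi fun i => continuous_apply (σ i)
  have hLopen : ∀ σ, IsOpen (L σ) := by
    intro σ
    rw [hL]
    exact isOpen_lt (Continuous.sub (hcont.comp (hcontσ σ)) hcont) continuous_const
  have hmemF : ∀ x, x ∈ F ↔ ∀ σ ∈ G, σ ≠ 1 → x ∈ L σ := by
    intro x; rw [hF]; simp
  -- heval : eval of renamed polynomial
  have heval : ∀ (x : Fin n → ℝ) (σ : Equiv.Perm (Fin n)),
      MvPolynomial.eval x (MvPolynomial.rename (⇑σ) p) = h (x ∘ ⇑σ) := by
    intro x σ; rw [hp]; simp [MvPolynomial.eval_rename]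
  refine ⟨?_, ?_, ?_⟩
  · -- openness
    rw [hF]
    exact (Set.toFinite (G : Set (Equiv.Perm (Fin n)))).isOpen_biInter
      (fun σ _ => isOpen_iInter_of_finite fun _ => hLopen σ)
  · -- disjointness
    intro σ hσ hσ1
    rw [Set.disjoint_left]
    rintro a ⟨x, hxF, rfl⟩ haF
    have h1 : h (x ∘ ⇑σ) - h x < 0 := by
      have := (hmemF x).1 hxF σ hσ hσ1
      rwa [hL] at this
    have h2 : h ((x ∘ ⇑σ) ∘ ⇑σ⁻¹) - h (x ∘ ⇑σ) < 0 := by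
      have := (hmemF _).1 haF σ⁻¹ (inv_mem hσ) (inv_ne_one.2 hσ1)
      rwa [hL] at this
    rw [hcomp, mul_inv_cancel] at h2
    simp only [Equiv.Perm.coe_one, Function.comp_id] at h2
    linarith
  · -- covering
    set T : Equiv.Perm (Fin n) → Set (Fin n → ℝ) := fun σ => (fun x => x ∘ ⇑σ) '' F with hT
    -- the product polynomial distinguishing orbit values
    set S : Finset (Equiv.Perm (Fin n) × Equiv.Perm (Fin n)) :=
      Finset.univ.filter (fun q => q.1 ∈ G ∧ q.2 ∈ G ∧ q.1 ≠ q.2) with hS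
    set Q : MvPolynomial (Fin n) ℝ :=
      ∏ q ∈ S, (MvPolynomial.rename (⇑q.1) p - MvPolynomial.rename (⇑q.2) p) with hQ
    have hfac : ∀ q ∈ S, MvPolynomial.rename (⇑q.1) p - MvPolynomial.rename (⇑q.2) p ≠ 0 := by
      rintro ⟨σ, τ⟩ hq hzero
      simp only [hS, Finset.mem_filter] at hq
      obtain ⟨-, hσG, hτG, hστ⟩ := hq
      rw [sub_eq_zero] at hzero
      -- then h (x ∘ σ) = h (x ∘ τ) for all x
      have hval : ∀ x : Fin n → ℝ, h (x ∘ ⇑σ) = h (x ∘ ⇑τ) := by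
        intro x
        have := congrArg (MvPolynomial.eval x) hzero
        rwa [heval, heval] at this
      set ρ : Equiv.Perm (Fin n) := τ⁻¹ * σ with hρ
      have hρG : ρ ∈ G := mul_mem (inv_mem hτG) hσG
      have hρ1 : ρ ≠ 1 := by
        intro hc
        exact hστ (inv_mul_eq_one.mp hc).symm
      obtain ⟨w, hw⟩ := hne ρ hρG hρ1
      rw [hL] at hw
      have : h (w ∘ ⇑ρ) = h w := by
        have h2 := hval (w ∘ ⇑τ⁻¹)
        rw [hcomp, hcomp, inv_mul_cancel] at h2
        rw [hρ]
        simpa using h2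
      simp only [Set.mem_setOf_eq, this] at hw
      linarith
    have hQne : Q ≠ 0 := Finset.prod_ne_zero_iff.2 hfac
    -- density of the union of translates
    have hdense : Dense (⋃ σ ∈ G, T σ) := by
      rw [dense_iff_inter_open]
      intro U hU hUne
      obtain ⟨z, hzU, hzQ⟩ := exists_eval_ne_zero_of_ne_zero hQne hU hUne
      have hdist : ∀ σ ∈ G, ∀ τ ∈ G, σ ≠ τ → h (z ∘ ⇑σ) ≠ h (z ∘ ⇑τ) := by
        intro σ hσG τ hτG hστ
        rw [hQ, map_prod] at hzQ
        have := Finset.prod_ne_zero_iff.1 hzQ (σ, τ)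
          (by simp [hS, hσG, hτG, hστ])
        rw [map_sub, heval, heval] at this
        exact sub_ne_zero.1 this
      -- pick the orbit element maximizing h
      obtain ⟨ρ, hρG, hρmax⟩ := Set.exists_max_image (G : Set (Equiv.Perm (Fin n)))
        (fun σ => h (z ∘ ⇑σ)) (Set.toFinite _) ⟨1, one_mem G⟩
      have hzρF : z ∘ ⇑ρ ∈ F := by
        rw [hmemF]
        intro τ hτG hτ1
        rw [hL]
        simp only [Set.mem_setOf_eq]
        rw [hcomp]
        have hle : h (z ∘ ⇑(ρ * τ)) ≤ h (z ∘ ⇑ρ) := hρmax (ρ * τ) (mul_mem hρG hτG)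
        have hne' : h (z ∘ ⇑(ρ * τ)) ≠ h (z ∘ ⇑ρ) :=
          hdist (ρ * τ) (mul_mem hρG hτG) ρ hρG (by simp [hτ1])
        have : h (z ∘ ⇑(ρ * τ)) < h (z ∘ ⇑ρ) := lt_of_le_of_ne hle hne'
        linarith
      refine ⟨z, hzU, ?_⟩
      apply Set.mem_biUnion (inv_mem hρG)
      refine ⟨z ∘ ⇑ρ, hzρF, ?_⟩
      show (z ∘ ⇑ρ) ∘ ⇑ρ⁻¹ = z
      rw [hcomp, mul_inv_cancel]
      simp
    have hclosed : IsClosed (⋃ σ ∈ G, closure (T σ)) :=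
      (Set.toFinite (G : Set (Equiv.Perm (Fin n)))).isClosed_biUnion
        (fun σ _ => isClosed_closure)
    apply Set.eq_univ_of_univ_subset
    calc Set.univ = closure (⋃ σ ∈ G, T σ) := hdense.closure_eq.symm
      _ ⊆ ⋃ σ ∈ G, closure (T σ) :=
        closure_minimal (Set.iUnion₂_mono fun σ _ => subset_closure) hclosed
end

section
/- Let G be a finite group of n×n permutation matrices, h : ℝ^n → ℝ any function, and P₁, …, P_ℓ ∈ G. If the integer program (minimize f over the feasible set S ⊆ U^n) has at least one optimal solution and G maps S to itself preserving f, then the program with the additional constraints h(P_j x) − h(x) ≤ 0 for j = 1,…,ℓ still has an optimal solution with the same optimal value. -/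
/-- Adding a family of breakers `h (Pⱼ x) - h x ≤ 0` (for `P₁, …, P_ℓ` from a
group `G` of symmetries of the program) preserves the existence of an optimal
solution with the same optimal value. -/
theorem breaker_family_preserves_optimum (n ℓ : ℕ)
    (G : Subgroup (Equiv.Perm (Fin n))) (U : Set ℝ) (hU : U.Finite)
    (f h : (Fin n → ℝ) → ℝ) (S : Set (Fin n → ℝ))
    (hSU : ∀ x ∈ S, ∀ i, x i ∈ U)
    (hGf : ∀ σ ∈ G, ∀ x ∈ S, f (x ∘ σ) = f x)
    (hGS : ∀ σ ∈ G, ∀ x : Fin n → ℝ, x ∈ S ↔ x ∘ σ ∈ S)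
    (P : Fin ℓ → Equiv.Perm (Fin n)) (hP : ∀ j, P j ∈ G)
    (xstar : Fin n → ℝ) (hxS : xstar ∈ S)
    (hopt : ∀ z ∈ S, f xstar ≤ f z) :
    ∃ ystar ∈ S, (∀ j : Fin ℓ, h (ystar ∘ P j) - h ystar ≤ 0) ∧
      f ystar = f xstar ∧
      ∀ z ∈ S, (∀ j : Fin ℓ, h (z ∘ P j) - h z ≤ 0) → f ystar ≤ f z := by
  -- choose σ ∈ G maximizing h (xstar ∘ σ)
  have hGfin : ((G : Set (Equiv.Perm (Fin n)))).Finite := Set.toFinite _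
  obtain ⟨σ, hσ, hmax⟩ := Set.Finite.exists_maximalFor (fun τ : Equiv.Perm (Fin n) => h (xstar ∘ ⇑τ))
    (G : Set (Equiv.Perm (Fin n))) hGfin ⟨1, G.one_mem⟩
  have hmax' : ∀ τ ∈ G, h (xstar ∘ τ) ≤ h (xstar ∘ σ) := by
    intro τ hτ
    by_contra hlt
    push_neg at hlt
    exact absurd (hmax (j := τ) hτ hlt.le) (not_le.mpr hlt)
  refine ⟨xstar ∘ σ, (hGS σ hσ xstar).mp hxS, ?_, hGf σ hσ xstar hxS, ?_⟩
  · intro j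
    have hmem : σ * P j ∈ G := G.mul_mem hσ (hP j)
    have : (xstar ∘ σ) ∘ P j = xstar ∘ (σ * P j) := rfl
    rw [this]
    linarith [hmax' _ hmem]
  · intro z hz _
    rw [hGf σ hσ xstar hxS]
    exact hopt z hz
end
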